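/- arXiv:2103.11336 — 5 statements merged into one kernel-verified Lean document; each statement's English description precedes it below -/
import Mathlib

section
/- Let G be a compact Hausdorff topological group. If the FC-center FC(G) has infinite index in G, then cp(G) = 0. -/
open MeasureTheory Subgroup
open scoped commutatorElement

/-- The FC-center of a group: the subgroup of elements whose conjugacy class is finite. -/
def fcCenter (G : Type*) [Group G] : Subgroup G where
  carrier := {x : G | {y : G | ∃ g : G, g * x * g⁻¹ = y}.Finite}
  one_mem' := Set.Finite.subset (Set.finite_singleton 1) (by rintro y ⟨g, rfl⟩; simp)
  mul_mem' := by
    intro a b ha hb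
    apply (ha.image2 (· * ·) hb).subset
    rintro y ⟨g, rfl⟩
    exact ⟨_, ⟨g, rfl⟩, _, ⟨g, rfl⟩, by group⟩
  inv_mem' := by
    intro a ha
    apply (ha.image (·⁻¹)).subset
    rintro y ⟨g, rfl⟩
    exact ⟨g * a * g⁻¹, ⟨g, rfl⟩, by group⟩

theorem commutator_mem_commutator' {G : Type*} [Group G] (x y : G) :
    ⁅x, y⁆ ∈ commutator G :=
  Subgroup.commutator_mem_commutator (Subgroup.mem_top x) (Subgroup.mem_top y)

/-- Two groups are isoclinic if there are compatible isomorphisms between their central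
quotients and their derived subgroups. -/
def Isoclinic (H K : Type*) [Group H] [Group K] : Prop :=
  ∃ (α : (H ⧸ Subgroup.center H) ≃* (K ⧸ Subgroup.center K))
    (β : ↥(commutator H) ≃* ↥(commutator K)),
    ∀ (x y : H) (x' y' : K),
      (x' : K ⧸ Subgroup.center K) = α (x : H ⧸ Subgroup.center H) →
      (y' : K ⧸ Subgroup.center K) = α (y : H ⧸ Subgroup.center H) →
      (⟨⁅x', y'⁆, commutator_mem_commutator' x' y'⟩ : ↥(commutator K)) =
        β ⟨⁅x, y⁆, commutator_mem_commutator' x y⟩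

/-!
The section of the commuting set at `x` is the centralizer `C(x)`. If `μ C(x) ≠ 0`, Steinhaus'
theorem makes `C(x)` open, hence of finite index, so `x ∈ FC(G)`. Since `x ↦ μ C(x)` is upper
semicontinuous, the set of such `x` is measurable; were its measure nonzero, `FC(G)` would be open
and of finite index. So almost every section is null.

Fubini cannot conclude from there: the commuting set is closed but need not be measurable for the
product σ-algebra. Instead, the tube lemma and outer regularity give each point a neighbourhood on
which the sections lie in one set of small measure, and a countable cover of `G` by such
neighbourhoods bounds the outer measure.
-/

open scoped ENNReal Topology
open Set Filter

theorem eventually_preimage_mk_subset_of_isClosed {X Y : Type*} [TopologicalSpace X]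
    [TopologicalSpace Y] [CompactSpace Y] {S : Set (X × Y)} (hS : IsClosed S) {U : Set Y}
    (hU : IsOpen U) {x : X} (hx : Prod.mk x ⁻¹' S ⊆ U) :
    ∀ᶠ x' in 𝓝 x, Prod.mk x' ⁻¹' S ⊆ U := by
  have hbad : IsClosed (Prod.fst '' (S ∩ Prod.snd ⁻¹' Uᶜ)) :=
    isClosedMap_fst_of_compactSpace _ (hS.inter (hU.isClosed_compl.preimage continuous_snd))
  filter_upwards [hbad.isOpen_compl.mem_nhds fun ⟨⟨_, y⟩, ⟨hy, hyU⟩, hx'⟩ => hyU (hx (hx' ▸ hy))]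
    with x' hx' y hy
  by_contra hyU
  exact hx' ⟨(x', y), ⟨hy, hyU⟩, rfl⟩

theorem upperSemicontinuous_measure_preimage_mk {X Y : Type*} [TopologicalSpace X]
    [TopologicalSpace Y] [CompactSpace Y] [MeasurableSpace Y] (ν : Measure Y) [ν.OuterRegular]
    {S : Set (X × Y)} (hS : IsClosed S) : UpperSemicontinuous fun x => ν (Prod.mk x ⁻¹' S) := by
  intro x r hr
  obtain ⟨U, hSU, hUo, hUr⟩ := Set.exists_isOpen_lt_of_lt _ r hr
  filter_upwards [eventually_preimage_mk_subset_of_isClosed hS hUo hSU] with x' hx'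
  exact (measure_mono hx').trans_lt hUr

namespace MeasureTheory.Measure

theorem prod_le_mul_of_forall_eventually_preimage_mk_subset {X Y : Type*}
    [TopologicalSpace X] [LindelofSpace X] [MeasurableSpace X] [OpensMeasurableSpace X]
    [MeasurableSpace Y] (μ : Measure X) (ν : Measure Y) [SFinite ν] {S : Set (X × Y)}
    {ε : ℝ≥0∞} (h : ∀ x, ∃ U, ν U ≤ ε ∧ ∀ᶠ x' in 𝓝 x, Prod.mk x' ⁻¹' S ⊆ U) :
    μ.prod ν S ≤ μ univ * ε := by
  rcases isEmpty_or_nonempty X with _ | _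
  · simp [eq_empty_of_isEmpty S]
  choose U hUε hU using h
  choose V hVU hVo hxV using fun x => eventually_nhds_iff.1 (hU x)
  obtain ⟨f, hf⟩ := isLindelof_univ.indexed_countable_subcover V hVo
    fun x _ => mem_iUnion.2 ⟨x, hxV x⟩
  set D : ℕ → Set X := disjointed fun n => V (f n)
  have hD : ⋃ n, D n = univ := by rw [iUnion_disjointed]; exact univ_subset_iff.1 hf
  have hSD : S ⊆ ⋃ n, D n ×ˢ U (f n) := by
    rintro ⟨x, y⟩ hxy
    obtain ⟨n, hn⟩ := mem_iUnion.1 (hD.symm ▸ mem_univ x : x ∈ ⋃ n, D n)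
    exact mem_iUnion.2 ⟨n, hn, hVU _ x (disjointed_subset (fun n => V (f n)) n hn) hxy⟩
  calc μ.prod ν S ≤ ∑' n, μ.prod ν (D n ×ˢ U (f n)) :=
        (measure_mono hSD).trans (measure_iUnion_le _)
    _ ≤ ∑' n, μ (D n) * ε := by
      simp_rw [Measure.prod_prod]
      gcongr with n
      exact hUε _
    _ = μ univ * ε := by
      rw [ENNReal.tsum_mul_right, ← measure_iUnion (disjoint_disjointed _)
        (MeasurableSet.disjointed fun n => (hVo _).measurableSet), hD]

theorem prod_null_of_isClosed {X Y : Type*} [TopologicalSpace X] [LindelofSpace X]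
    [MeasurableSpace X] [OpensMeasurableSpace X] [TopologicalSpace Y] [CompactSpace Y]
    [MeasurableSpace Y] (μ : Measure X) [IsFiniteMeasure μ] [μ.OuterRegular] (ν : Measure Y)
    [IsFiniteMeasure ν] [ν.OuterRegular] {S : Set (X × Y)} (hS : IsClosed S)
    (h : ∀ᵐ x ∂μ, ν (Prod.mk x ⁻¹' S) = 0) : μ.prod ν S = 0 := by
  have hsmall : ∀ δ, 0 < δ → μ.prod ν S ≤ δ * (ν univ + μ univ) := by
    intro δ hδ
    obtain ⟨W, hbadW, hWo, hWδ⟩ :=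
      Set.exists_isOpen_lt_of_lt (μ := μ) {x | ¬ν (Prod.mk x ⁻¹' S) = 0} δ (by rwa [ae_iff.1 h])
    have hout : μ.prod ν (S \ W ×ˢ univ) ≤ μ univ * δ := by
      refine prod_le_mul_of_forall_eventually_preimage_mk_subset μ ν fun x => ?_
      by_cases hxW : x ∈ W
      · refine ⟨∅, by simp, ?_⟩
        filter_upwards [hWo.mem_nhds hxW] with x' hx' y hy
        exact hy.2 ⟨hx', mem_univ y⟩
      · have hx0 : ν (Prod.mk x ⁻¹' S) = 0 := not_not.1 fun hx => hxW (hbadW hx)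
        obtain ⟨U, hSU, hUo, hUδ⟩ := Set.exists_isOpen_lt_of_lt _ δ (hx0 ▸ hδ)
        exact ⟨U, hUδ.le, (eventually_preimage_mk_subset_of_isClosed hS hUo hSU).mono
          fun x' hx' y hy => hx' hy.1⟩
    calc μ.prod ν S ≤ μ.prod ν (S ∩ W ×ˢ univ) + μ.prod ν (S \ W ×ˢ univ) :=
          measure_le_inter_add_sdiff _ _ _
      _ ≤ μ W * ν univ + μ univ * δ := by
          gcongr
          exact (measure_mono inter_subset_right).trans_eq (Measure.prod_prod _ _)
      _ ≤ δ * ν univ + δ * μ univ := by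
          rw [mul_comm (μ univ)]
          gcongr
      _ = δ * (ν univ + μ univ) := (mul_add _ _ _).symm
  have hlim : Tendsto (fun δ => δ * (ν univ + μ univ)) (𝓝[>] 0) (𝓝 0) :=
    ((ENNReal.continuous_mul_const (by finiteness)).tendsto' 0 0 (zero_mul _)).mono_left
      nhdsWithin_le_nhds
  exact nonpos_iff_eq_zero.1 (ge_of_tendsto hlim (eventually_nhdsWithin_of_forall hsmall))

end MeasureTheory.Measure

theorem mem_fcCenter_of_finiteIndex_centralizer {G : Type*} [Group G] {x : G}
    (h : (Subgroup.centralizer {x}).FiniteIndex) : x ∈ fcCenter G := by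
  have hidx : (MulAction.stabilizer (ConjAct G) x).index ≠ 0 := by
    have := (MulAction.stabilizer (ConjAct G) x).index_comap_of_surjective
      (f := ConjAct.toConjAct.toMonoidHom) ConjAct.toConjAct.surjective
    rw [← this]
    exact Subgroup.centralizer_eq_comap_stabilizer x ▸ h.index_ne_zero
  have horbit := Set.finite_of_ncard_ne_zero (MulAction.index_stabilizer (ConjAct G) x ▸ hidx)
  show {y : G | ∃ g : G, g * x * g⁻¹ = y}.Finite
  convert horbit using 1
  ext y
  rw [ConjAct.mem_orbit_conjAct, isConj_comm, isConj_iff]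
  rfl

theorem Subgroup.isOpen_of_measure_ne_zero {G : Type*} [Group G] [TopologicalSpace G]
    [IsTopologicalGroup G] [LocallyCompactSpace G] [MeasurableSpace G] [BorelSpace G]
    (μ : Measure G) [μ.IsHaarMeasure] [μ.InnerRegular] (H : Subgroup G) {A : Set G}
    (hAH : A ⊆ H) (hA : MeasurableSet A) (hμA : μ A ≠ 0) : IsOpen (H : Set G) := by
  refine H.isOpen_of_mem_nhds (mem_of_superset
    (Measure.div_mem_nhds_one_of_haar_pos μ A hA (pos_iff_ne_zero.2 hμA)) ?_)
  rintro _ ⟨a, ha, b, hb, rfl⟩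
  exact H.div_mem (hAH ha) (hAH hb)

theorem Subgroup.finiteIndex_of_measure_ne_zero {G : Type*} [Group G] [TopologicalSpace G]
    [IsTopologicalGroup G] [CompactSpace G] [MeasurableSpace G] [BorelSpace G]
    (μ : Measure G) [μ.IsHaarMeasure] [μ.InnerRegular] (H : Subgroup G) {A : Set G}
    (hAH : A ⊆ H) (hA : MeasurableSet A) (hμA : μ A ≠ 0) : H.FiniteIndex :=
  have := H.quotient_finite_of_isOpen (H.isOpen_of_measure_ne_zero μ hAH hA hμA)
  H.finiteIndex_of_finite_quotient

theorem cp_eq_zero_of_not_finiteIndex_fcCenter_general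
    {G : Type*} [Group G] [TopologicalSpace G] [IsTopologicalGroup G] [CompactSpace G]
    [T2Space G] [MeasurableSpace G] [BorelSpace G]
    (μ : Measure G) [μ.IsHaarMeasure]
    (h : ¬ (fcCenter G).FiniteIndex) :
    (μ.prod μ) {p : G × G | p.1 * p.2 = p.2 * p.1} = 0 := by
  set S := {p : G × G | p.1 * p.2 = p.2 * p.1}
  have hS : IsClosed S := isClosed_eq (continuous_fst.mul continuous_snd)
    (continuous_snd.mul continuous_fst)
  have hsection (x : G) : Prod.mk x ⁻¹' S = Subgroup.centralizer {x} := by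
    ext y
    simp [S, Subgroup.mem_centralizer_singleton_iff, eq_comm]
  set A := {x | μ (Prod.mk x ⁻¹' S) ≠ 0}
  have hA : MeasurableSet A :=
    (upperSemicontinuous_measure_preimage_mk μ hS).measurable (measurableSet_singleton 0).compl
  have hAfc : A ⊆ fcCenter G := fun x hx =>
    mem_fcCenter_of_finiteIndex_centralizer <| Subgroup.finiteIndex_of_measure_ne_zero μ _
      (hsection x).subset (hS.preimage (Continuous.prodMk_right x)).measurableSet hx
  have hμA : μ A = 0 := by
    by_contra hμA
    exact h (Subgroup.finiteIndex_of_measure_ne_zero μ _ hAfc hA hμA)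
  exact Measure.prod_null_of_isClosed μ μ hS (ae_iff.2 hμA)

/-- If the FC-center of a compact Hausdorff group has infinite index,
then the commuting probability is zero. -/
theorem cp_eq_zero_of_not_finiteIndex_fcCenter
    {G : Type*} [Group G] [TopologicalSpace G] [IsTopologicalGroup G] [CompactSpace G]
    [T2Space G] [MeasurableSpace G] [BorelSpace G]
    (μ : Measure G) [μ.IsHaarMeasure] [μ.Regular] [IsProbabilityMeasure μ]
    (h : ¬ (fcCenter G).FiniteIndex) :
    (μ.prod μ) {p : G × G | p.1 * p.2 = p.2 * p.1} = 0 :=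
  cp_eq_zero_of_not_finiteIndex_fcCenter_general μ h
end

section
/- Let G be a compact Hausdorff topological group whose center Z(G) has finite index n in G. Then cp(G) = N / n², where N is the number of pairs of cosets (aZ(G), bZ(G)) ∈ G/Z(G) × G/Z(G) such that ab = ba (this condition is independent of the choice of coset representatives a and b). -/
open MeasureTheory Subgroup
open scoped commutatorElement

/-!
Whether two elements commute depends only on their cosets modulo the center, so the commuting
set is the union of the rectangles `aZ × bZ` over the commuting coset pairs. By left invariance
every coset of the closed subgroup `Z = Z(G)` has Haar measure `1 / n`, so every rectangle has
measure `1 / n²`.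
-/

open scoped ENNReal

theorem Set.preimage_prodMap_singleton {α β γ δ : Type*} (f : α → γ) (g : β → δ)
    (q : γ × δ) :
    Prod.map f g ⁻¹' {q} = (f ⁻¹' {q.1}) ×ˢ (g ⁻¹' {q.2}) := by
  rw [← Set.preimage_prod_map_prod, Set.singleton_prod_singleton]

theorem MeasureTheory.measure_preimage_eq_ncard_mul {α β : Type*} [MeasurableSpace α]
    {μ : Measure α} {f : α → β} {s : Set β} (hs : s.Finite) {c : ℝ≥0∞}
    (hf : ∀ y ∈ s, MeasurableSet (f ⁻¹' {y})) (hc : ∀ y ∈ s, μ (f ⁻¹' {y}) = c) :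
    μ (f ⁻¹' s) = s.ncard * c := by
  obtain ⟨t, rfl⟩ := hs.exists_finset_coe
  rw [← sum_measure_preimage_singleton t hf, Finset.sum_congr rfl hc, Finset.sum_const,
    nsmul_eq_mul, Set.ncard_coe_finset]

theorem QuotientGroup.preimage_mk_singleton {G : Type*} [Group G] (H : Subgroup G) (q : G ⧸ H) :
    QuotientGroup.mk ⁻¹' {q} = (q.out⁻¹ * ·) ⁻¹' (H : Set G) := by
  ext x
  change (x : G ⧸ H) = q ↔ q.out⁻¹ * x ∈ H
  rw [← QuotientGroup.eq, QuotientGroup.out_eq', eq_comm]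

namespace Subgroup

theorem isClosed_center (G : Type*) [Group G] [TopologicalSpace G]
    [SeparatelyContinuousMul G] [T2Space G] : IsClosed (center G : Set G) := by
  rw [coe_center, ← Set.centralizer_univ]
  exact Set.isClosed_centralizer _

section Measure

variable {G : Type*} [Group G] [MeasurableSpace G] [MeasurableMul G] {H : Subgroup G}

theorem measurableSet_preimage_mk_singleton (hH : MeasurableSet (H : Set G)) (q : G ⧸ H) :
    MeasurableSet (QuotientGroup.mk ⁻¹' {q} : Set G) := by
  rw [QuotientGroup.preimage_mk_singleton]
  exact hH.preimage (measurable_const_mul _)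

theorem measure_preimage_mk_singleton [H.FiniteIndex] (hH : MeasurableSet (H : Set G))
    (μ : Measure G) [μ.IsMulLeftInvariant] [IsProbabilityMeasure μ] (q : G ⧸ H) :
    μ (QuotientGroup.mk ⁻¹' {q}) = (H.index : ℝ≥0∞)⁻¹ := by
  rw [QuotientGroup.preimage_mk_singleton, measure_preimage_mul]
  refine ENNReal.eq_inv_of_mul_eq_one_left ?_
  rw [mul_comm, H.index_mul_measure hH, measure_univ]

end Measure

section Commute

variable {G : Type*} [Group G] {H : Subgroup G}

theorem commute_out_mk_iff (hH : H ≤ center G) (x y : G) :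
    Commute (QuotientGroup.mk x : G ⧸ H).out (QuotientGroup.mk y : G ⧸ H).out ↔
      Commute x y := by
  have central (u : H) (g : G) : g * u = u * g := mem_center_iff.mp (hH u.2) g
  have shift (a b : G) (u v : H) : a * u * (b * v) = a * b * (u * v) := by
    rw [mul_assoc, ← mul_assoc (u : G), ← central, mul_assoc, mul_assoc]
  obtain ⟨z, hz⟩ := QuotientGroup.mk_out_eq_mul H x
  obtain ⟨w, hw⟩ := QuotientGroup.mk_out_eq_mul H y
  rw [hz, hw, commute_iff_eq, commute_iff_eq, shift, shift, ← central w, mul_left_inj]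

theorem setOf_commute_eq_preimage_prodMap_mk (hH : H ≤ center G) :
    {p : G × G | p.1 * p.2 = p.2 * p.1} =
      Prod.map QuotientGroup.mk QuotientGroup.mk ⁻¹'
        {q : (G ⧸ H) × (G ⧸ H) | Commute q.1.out q.2.out} := by
  ext ⟨x, y⟩
  exact (commute_out_mk_iff hH x y).symm

end Commute

end Subgroup

theorem cp_eq_card_commuting_coset_pairs_div_sq_general
    {G : Type*} [Group G] [TopologicalSpace G] [IsTopologicalGroup G]
    [T2Space G] [MeasurableSpace G] [BorelSpace G]
    (μ : Measure G) [μ.IsHaarMeasure] [IsProbabilityMeasure μ]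
    (n : ℕ) (hn : n ≠ 0) (h : (Subgroup.center G).index = n) :
    ((μ.prod μ) {p : G × G | p.1 * p.2 = p.2 * p.1}).toReal
      = (Nat.card {p : (G ⧸ Subgroup.center G) × (G ⧸ Subgroup.center G) //
            Commute (Quotient.out p.1) (Quotient.out p.2)} : ℝ) / (n : ℝ) ^ 2 := by
  have : (center G).FiniteIndex := ⟨h ▸ hn⟩
  have hZ : MeasurableSet (center G : Set G) := (isClosed_center G).measurableSet
  have hcoset := measurableSet_preimage_mk_singleton hZ
  have hmeasure := (center G).measure_preimage_mk_singleton hZ μ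
  have hrect (q : (G ⧸ center G) × (G ⧸ center G)) :
      MeasurableSet (Prod.map QuotientGroup.mk QuotientGroup.mk ⁻¹' {q}) := by
    rw [Set.preimage_prodMap_singleton]
    exact (hcoset q.1).prod (hcoset q.2)
  have hrect_measure (q : (G ⧸ center G) × (G ⧸ center G)) :
      (μ.prod μ) (Prod.map QuotientGroup.mk QuotientGroup.mk ⁻¹' {q}) =
        (n : ℝ≥0∞)⁻¹ * (n : ℝ≥0∞)⁻¹ := by
    rw [Set.preimage_prodMap_singleton, Measure.prod_prod, hmeasure, hmeasure, h]
  rw [setOf_commute_eq_preimage_prodMap_mk le_rfl,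
    measure_preimage_eq_ncard_mul (Set.toFinite _) (fun q _ ↦ hrect q)
      (fun q _ ↦ hrect_measure q)]
  simp only [ENNReal.toReal_mul, ENNReal.toReal_inv, ENNReal.toReal_natCast,
    ← Nat.card_coe_set_eq, div_eq_mul_inv, sq, mul_inv]
  rfl

/-- If the center has finite index `n`, then `cp G = N / n²` where `N`
is the number of pairs of cosets of the center whose representatives commute. -/
theorem cp_eq_card_commuting_coset_pairs_div_sq
    {G : Type*} [Group G] [TopologicalSpace G] [IsTopologicalGroup G] [CompactSpace G]
    [T2Space G] [MeasurableSpace G] [BorelSpace G]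
    (μ : Measure G) [μ.IsHaarMeasure] [μ.Regular] [IsProbabilityMeasure μ]
    (n : ℕ) (hn : n ≠ 0) (h : (Subgroup.center G).index = n) :
    ((μ.prod μ) {p : G × G | p.1 * p.2 = p.2 * p.1}).toReal
      = (Nat.card {p : (G ⧸ Subgroup.center G) × (G ⧸ Subgroup.center G) //
            Commute (Quotient.out p.1) (Quotient.out p.2)} : ℝ) / (n : ℝ) ^ 2 :=
  cp_eq_card_commuting_coset_pairs_div_sq_general μ n hn h
end

section
/- Let F be a compact Hausdorff topological group whose center Z(F) has finite index, and let H be a finite group. If F and H are isoclinic, then cp(F) = cp(H), where cp(H) = |{(x,y) ∈ H × H : xy = yx}| / |H|². -/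
/-!
Whether `x` and `y` commute depends only on their cosets modulo the centre, so the commuting set
of `G × G` is the full preimage of a set `commutingCosets G` of pairs of central cosets. Each
coset of `Z(G) × Z(G)` has Haar measure `[G : Z(G)]⁻²`, and for finite `G` it has `|Z(G)|²`
elements; either way the commuting probability is `|commutingCosets G| / [G : Z(G)]²`.
An isoclinism `(α, β)` identifies the central quotients, and `α × α` maps `commutingCosets F`
onto `commutingCosets H` because a commutator is trivial exactly when its `β`-image is.
-/

open MeasureTheory Subgroup
open scoped commutatorElement

open QuotientGroup
open scoped Pointwise ENNReal

lemma Nat.card_preimage_equiv {α β : Type*} (e : α ≃ β) (s : Set β) :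
    Nat.card (e ⁻¹' s) = Nat.card s :=
  Nat.card_preimage_of_injective e.injective (by simp)

section Counting

variable {G : Type*} [Group G]

lemma Commute.of_mk_center_eq {x y x₁ y₁ : G}
    (hx : (x₁ : G ⧸ center G) = x) (hy : (y₁ : G ⧸ center G) = y)
    (h : Commute x₁ y₁) : Commute x y := by
  obtain ⟨z, rfl⟩ : ∃ z : center G, x = x₁ * z := ⟨⟨_, QuotientGroup.eq.mp hx⟩, by simp⟩
  obtain ⟨w, rfl⟩ : ∃ w : center G, y = y₁ * w := ⟨⟨_, QuotientGroup.eq.mp hy⟩, by simp⟩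
  exact (h.mul_right (mem_center_iff.mp w.2 x₁)).mul_left (mem_center_iff.mp z.2 _).symm

variable (G) in
def commutingCosets : Set ((G ⧸ center G) × (G ⧸ center G)) :=
  Prod.map QuotientGroup.mk QuotientGroup.mk '' {p : G × G | Commute p.1 p.2}

lemma mk_mem_commutingCosets {x y : G} :
    ((x : G ⧸ center G), (y : G ⧸ center G)) ∈ commutingCosets G ↔ Commute x y := by
  constructor
  · rintro ⟨⟨x₁, y₁⟩, h, hxy⟩
    exact h.of_mk_center_eq (congrArg Prod.fst hxy) (congrArg Prod.snd hxy)
  · exact fun h ↦ ⟨(x, y), h, rfl⟩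

lemma prodMap_mk_preimage_commutingCosets :
    Prod.map QuotientGroup.mk QuotientGroup.mk ⁻¹' commutingCosets G =
      {p : G × G | Commute p.1 p.2} :=
  Set.ext fun _ ↦ mk_mem_commutingCosets

lemma prodMap_mk_preimage_eq (N : Subgroup G) (S : Set ((G ⧸ N) × (G ⧸ N))) :
    Prod.map QuotientGroup.mk QuotientGroup.mk ⁻¹' S =
      ((↑) : G × G → (G × G) ⧸ N.prod N) ⁻¹' (prodEquiv N N ⁻¹' S) :=
  rfl

lemma card_prodMap_mk_preimage (N : Subgroup G) (S : Set ((G ⧸ N) × (G ⧸ N))) :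
    Nat.card (Prod.map QuotientGroup.mk QuotientGroup.mk ⁻¹' S) =
      Nat.card N ^ 2 * Nat.card S := by
  rw [prodMap_mk_preimage_eq, card_preimage_mk, Nat.card_preimage_equiv,
    Nat.card_congr (Subgroup.prodEquiv N N).toEquiv, Nat.card_prod, sq]

lemma commProb_eq_card_commutingCosets [Finite G] :
    commProb G = Nat.card (commutingCosets G) / ((center G).index : ℚ) ^ 2 := by
  have hZ : (Nat.card (center G) : ℚ) ≠ 0 := by exact_mod_cast Nat.card_pos.ne'
  have hcard : Nat.card {p : G × G // Commute p.1 p.2} =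
      Nat.card (center G) ^ 2 * Nat.card (commutingCosets G) := by
    rw [← card_prodMap_mk_preimage, prodMap_mk_preimage_commutingCosets]
    rfl
  rw [commProb_def, hcard, ← card_mul_index (center G)]
  push_cast
  field_simp

end Counting

instance Prod.instMeasurableMul {M N : Type*} [Mul M] [Mul N] [MeasurableSpace M]
    [MeasurableSpace N] [MeasurableMul M] [MeasurableMul N] : MeasurableMul (M × N) where
  measurable_const_mul c := (measurable_const_mul c.1).prodMap (measurable_const_mul c.2)
  measurable_mul_const c := (measurable_mul_const c.1).prodMap (measurable_mul_const c.2)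

section Measure

variable {G : Type*} [Group G] [MeasurableSpace G] [MeasurableMul G] (μ : Measure G)
  [μ.IsMulLeftInvariant] [IsProbabilityMeasure μ]

lemma Subgroup.measure_eq_inv_index (N : Subgroup G) [N.FiniteIndex]
    (hN : MeasurableSet (N : Set G)) : μ N = (N.index : ℝ≥0∞)⁻¹ := by
  refine ENNReal.eq_inv_of_mul_eq_one_left ?_
  rw [mul_comm, N.index_mul_measure hN, measure_univ]

lemma Subgroup.measure_preimage_mk (N : Subgroup G) [N.FiniteIndex]
    (hN : MeasurableSet (N : Set G)) (T : Set (G ⧸ N)) :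
    μ (QuotientGroup.mk ⁻¹' T) = Nat.card T / N.index := by
  have hfiber (q : G ⧸ N) : QuotientGroup.mk ⁻¹' {q} = q.out • (N : Set G) := by
    ext x
    rw [mem_leftCoset_iff, Set.mem_preimage, Set.mem_singleton_iff, SetLike.mem_coe,
      ← QuotientGroup.eq, QuotientGroup.out_eq', eq_comm]
  have := Fintype.ofFinite (G ⧸ N)
  classical
  rw [← T.coe_toFinset, ← sum_measure_preimage_singleton]
  · simp_rw [hfiber, measure_smul, N.measure_eq_inv_index μ hN]
    rw [Finset.sum_const, nsmul_eq_mul, Set.coe_toFinset, ← Nat.card_eq_card_toFinset,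
      div_eq_mul_inv]
  · exact fun q _ ↦ hfiber q ▸ hN.const_smul _

lemma measure_prodMap_mk_preimage (N : Subgroup G) [N.FiniteIndex]
    (hN : MeasurableSet (N : Set G)) (S : Set ((G ⧸ N) × (G ⧸ N))) :
    (μ.prod μ) (Prod.map QuotientGroup.mk QuotientGroup.mk ⁻¹' S) =
      Nat.card S / (N.index : ℝ≥0∞) ^ 2 := by
  have hNN : MeasurableSet (N.prod N : Set (G × G)) := by
    rw [coe_prod]
    exact hN.prod hN
  rw [prodMap_mk_preimage_eq, (N.prod N).measure_preimage_mk (μ.prod μ) hNN,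
    Nat.card_preimage_equiv, index_prod, sq, Nat.cast_mul]

lemma measure_commute_eq_card_commutingCosets [(center G).FiniteIndex]
    (hZ : MeasurableSet (center G : Set G)) :
    (μ.prod μ) {p : G × G | Commute p.1 p.2} =
      Nat.card (commutingCosets G) / ((center G).index : ℝ≥0∞) ^ 2 := by
  rw [← prodMap_mk_preimage_commutingCosets, measure_prodMap_mk_preimage μ _ hZ]

end Measure

lemma Subgroup.isClosed_center_s6 {G : Type*} [Group G] [TopologicalSpace G]
    [SeparatelyContinuousMul G] [T2Space G] : IsClosed (center G : Set G) := by
  rw [coe_center, ← Set.centralizer_univ]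
  exact Set.isClosed_centralizer _

section Isoclinism

variable {F H : Type*} [Group F] [Group H]

/-- `Isoclinic F H` unfolds to `∃ α β, IsIsoclinism α β`. -/
def IsIsoclinism (α : F ⧸ center F ≃* H ⧸ center H) (β : commutator F ≃* commutator H) :
    Prop :=
  ∀ (x y : F) (x' y' : H), (x' : H ⧸ center H) = α x → (y' : H ⧸ center H) = α y →
    (⟨⁅x', y'⁆, commutator_mem_commutator' x' y'⟩ : commutator H) =
      β ⟨⁅x, y⁆, commutator_mem_commutator' x y⟩

variable {α : F ⧸ center F ≃* H ⧸ center H} {β : commutator F ≃* commutator H}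

lemma IsIsoclinism.commute_iff (hαβ : IsIsoclinism α β) {x y : F} {x' y' : H}
    (hx : (x' : H ⧸ center H) = α x) (hy : (y' : H ⧸ center H) = α y) :
    Commute x' y' ↔ Commute x y := by
  rw [← commutatorElement_eq_one_iff_commute, ← commutatorElement_eq_one_iff_commute,
    ← Subgroup.mk_eq_one (h := commutator_mem_commutator' x' y'), hαβ x y x' y' hx hy,
    map_eq_one_iff β β.injective, Subgroup.mk_eq_one]

lemma IsIsoclinism.preimage_commutingCosets (hαβ : IsIsoclinism α β) :
    Prod.map α α ⁻¹' commutingCosets H = commutingCosets F := by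
  ext ⟨a, b⟩
  obtain ⟨x, rfl⟩ := QuotientGroup.mk_surjective a
  obtain ⟨y, rfl⟩ := QuotientGroup.mk_surjective b
  obtain ⟨x', hx⟩ := QuotientGroup.mk_surjective (α x)
  obtain ⟨y', hy⟩ := QuotientGroup.mk_surjective (α y)
  rw [Set.mem_preimage, Prod.map_apply, ← hx, ← hy, mk_mem_commutingCosets,
    mk_mem_commutingCosets, hαβ.commute_iff hx hy]

lemma Isoclinic.index_center_eq (h : Isoclinic F H) : (center F).index = (center H).index := by
  obtain ⟨α, -, -⟩ := h
  exact Nat.card_congr α.toEquiv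

lemma Isoclinic.card_commutingCosets_eq (h : Isoclinic F H) :
    Nat.card (commutingCosets F) = Nat.card (commutingCosets H) := by
  obtain ⟨α, β, hαβ⟩ := h
  rw [← IsIsoclinism.preimage_commutingCosets hαβ]
  exact Nat.card_preimage_equiv (α.toEquiv.prodCongr α.toEquiv) _

end Isoclinism

theorem cp_eq_commProb_of_isoclinic_general
    {F : Type*} [Group F] [TopologicalSpace F] [IsTopologicalGroup F]
    [T2Space F] [MeasurableSpace F] [BorelSpace F]
    (μ : Measure F) [μ.IsHaarMeasure] [IsProbabilityMeasure μ]
    [(Subgroup.center F).FiniteIndex]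
    (H : Type*) [Group H] [Finite H] (h : Isoclinic F H) :
    ((μ.prod μ) {p : F × F | p.1 * p.2 = p.2 * p.1}).toReal = (commProb H : ℝ) := by
  have hZ : MeasurableSet (center F : Set F) := isClosed_center_s6.measurableSet
  have hcp := measure_commute_eq_card_commutingCosets μ hZ
  rw [h.index_center_eq, h.card_commutingCosets_eq] at hcp
  change ((μ.prod μ) {p : F × F | Commute p.1 p.2}).toReal = _
  rw [hcp, commProb_eq_card_commutingCosets, ENNReal.toReal_div]
  push_cast
  rfl

/-- A compact group with center of finite index that is isoclinic to a
finite group has the same commuting probability as that finite group. -/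
theorem cp_eq_commProb_of_isoclinic
    {F : Type*} [Group F] [TopologicalSpace F] [IsTopologicalGroup F] [CompactSpace F]
    [T2Space F] [MeasurableSpace F] [BorelSpace F]
    (μ : Measure F) [μ.IsHaarMeasure] [μ.Regular] [IsProbabilityMeasure μ]
    [(Subgroup.center F).FiniteIndex]
    (H : Type*) [Group H] [Finite H] (h : Isoclinic F H) :
    ((μ.prod μ) {p : F × F | p.1 * p.2 = p.2 * p.1}).toReal = (commProb H : ℝ) :=
  cp_eq_commProb_of_isoclinic_general μ H h
end

section
/- Let G be a compact Hausdorff topological group and let y ∈ G be an element whose conjugacy class is infinite. Then the centralizer C_G(y) = {a ∈ G : ay = ya} has Haar measure 0 in G. -/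
open MeasureTheory Subgroup
open scoped commutatorElement

/-!
The left cosets of the centralizer of `y` are pairwise disjoint, have equal Haar measure, and
are in bijection with the conjugacy class of `y`. Infinitely many disjoint sets of equal measure
fit into a space of finite measure only if that measure is zero.
-/

open scoped Pointwise

theorem Subgroup.measure_eq_zero_of_index_eq_zero {G : Type*} [Group G] [MeasurableSpace G]
    [MeasurableMul G] {H : Subgroup G} (hH : MeasurableSet (H : Set G)) (hidx : H.index = 0)
    (μ : Measure G) [μ.IsMulLeftInvariant] [IsFiniteMeasure μ] : μ H = 0 := by
  by_contra hμ
  obtain ⟨s, hs, -⟩ := H.exists_isComplement_left 1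
  have : Infinite s :=
    not_finite_iff_infinite.mp <| hs.finite_left_iff.not.mpr <| not_finiteIndex_iff.mpr hidx
  refine measure_ne_top μ Set.univ (top_unique ?_)
  calc ⊤ = ∑' a : s, μ (a.val • (H : Set G)) := by
        simp [measure_smul, ENNReal.tsum_const_eq_top_of_ne_zero hμ]
    _ ≤ μ (⋃ a : s, a.val • (H : Set G)) :=
        tsum_meas_le_meas_iUnion_of_disjoint μ (fun _ ↦ hH.const_smul _)
          fun a b hab ↦ hs.pairwiseDisjoint_smul a.2 b.2 (Subtype.val_injective.ne hab)
    _ ≤ μ Set.univ := measure_mono (Set.subset_univ _)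

theorem Subgroup.index_centralizer_singleton {G : Type*} [Group G] (y : G) :
    (centralizer {y}).index = (ConjClasses.mk y).carrier.ncard := by
  rw [centralizer_eq_comap_stabilizer, ← ConjAct.orbit_eq_carrier_conjClasses,
    ← MulAction.index_stabilizer]
  exact index_comap_of_surjective _ ConjAct.toConjAct.surjective

theorem haar_measure_centralizer_eq_zero_general
    {G : Type*} [Group G] [TopologicalSpace G] [IsTopologicalGroup G]
    [T2Space G] [MeasurableSpace G] [BorelSpace G]
    (μ : Measure G) [μ.IsHaarMeasure] [IsProbabilityMeasure μ]
    (y : G) (hy : {z : G | ∃ g : G, g * y * g⁻¹ = z}.Infinite) :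
    μ {a : G | a * y = y * a} = 0 := by
  have hcarrier : (ConjClasses.mk y).carrier = {z : G | ∃ g : G, g * y * g⁻¹ = z} := by
    ext z
    rw [Set.mem_ofPred_eq, ← isConj_iff, ConjClasses.mem_carrier_iff_mk_eq,
      ConjClasses.mk_eq_mk_iff_isConj, isConj_comm]
  have hidx : (centralizer {y}).index = 0 := by
    rw [index_centralizer_singleton, hcarrier, hy.ncard]
  have hclosed : IsClosed (centralizer {y} : Set G) := Set.isClosed_centralizer _
  have hcentralizer : (centralizer {y} : Set G) = {a : G | a * y = y * a} := by
    ext a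
    simp [mem_centralizer_singleton_iff, eq_comm]
  rw [← hcentralizer]
  exact measure_eq_zero_of_index_eq_zero hclosed.measurableSet hidx μ

/-- The centralizer of an element with infinite conjugacy class is a
Haar null set. -/
theorem haar_measure_centralizer_eq_zero
    {G : Type*} [Group G] [TopologicalSpace G] [IsTopologicalGroup G] [CompactSpace G]
    [T2Space G] [MeasurableSpace G] [BorelSpace G]
    (μ : Measure G) [μ.IsHaarMeasure] [μ.Regular] [IsProbabilityMeasure μ]
    (y : G) (hy : {z : G | ∃ g : G, g * y * g⁻¹ = z}.Infinite) :
    μ {a : G | a * y = y * a} = 0 :=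
  haar_measure_centralizer_eq_zero_general μ y hy
end

section
/- Let G be a compact Hausdorff topological group. If cp(G) > 1/4, then G equals its FC-center, i.e., every element of G has a finite conjugacy class. -/
open MeasureTheory Subgroup
open scoped commutatorElement

/-!
The set of commuting pairs is closed in `G × G`, but without second countability it need not be
measurable for the product σ-algebra, so we bound a measurable superset instead. If `x` has an
infinite conjugacy class, pick countably many continuous functions separating infinitely many of
its conjugates and let `N` be the closed normal subgroup of elements `g` with
`f (h * g * h') = f (h * h')` for all these `f`. Its preimages under continuous maps `G × G → G`
are product-measurable (by Stone–Weierstrass), and `x` still has infinitely many conjugates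
modulo `N`. For the pairs commuting modulo `N`, the section over `a` is a subgroup `C a`: it is
null unless `a` lies in the preimage `H` of the FC-center of `G ⧸ N`, and has measure at most
`1/2` unless `a ∈ C x`. As `H` is proper and `C x` is null, the measure is at most `1/4`.
-/

open scoped ENNReal Pointwise

theorem exists_continuousMap_apply_ne {X : Type*} [TopologicalSpace X] [NormalSpace X]
    [T1Space X] {x y : X} (hxy : x ≠ y) : ∃ f : C(X, ℝ), f x ≠ f y := by
  obtain ⟨f, hfx, hfy, -⟩ := exists_continuous_zero_one_of_isClosed isClosed_singleton
    isClosed_singleton (Set.disjoint_singleton.mpr hxy)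
  exact ⟨f, by simp [hfx rfl, hfy rfl]⟩

def measurableContinuousMaps (X Y : Type*) [TopologicalSpace X] [TopologicalSpace Y]
    [MeasurableSpace X] [MeasurableSpace Y] : Subalgebra ℝ C(X × Y, ℝ) where
  carrier := {F | Measurable F}
  mul_mem' hF hG := hF.mul hG
  add_mem' hF hG := hF.add hG
  algebraMap_mem' _ := measurable_const

theorem Continuous.measurable_of_compactSpace_prod {X Y : Type*} [TopologicalSpace X]
    [TopologicalSpace Y] [CompactSpace X] [CompactSpace Y] [T2Space X] [T2Space Y]
    [MeasurableSpace X] [MeasurableSpace Y] [BorelSpace X] [BorelSpace Y] {F : X × Y → ℝ}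
    (hF : Continuous F) : Measurable F := by
  have hsep : (measurableContinuousMaps X Y).SeparatesPoints := by
    rintro ⟨x, y⟩ ⟨x', y'⟩ hne
    by_cases hx : x = x'
    · subst hx
      obtain ⟨f, hf⟩ := exists_continuousMap_apply_ne (ne_of_apply_ne (Prod.mk x) hne)
      exact ⟨_, ⟨f.comp ContinuousMap.snd, f.measurable.comp measurable_snd, rfl⟩, hf⟩
    · obtain ⟨f, hf⟩ := exists_continuousMap_apply_ne hx
      exact ⟨_, ⟨f.comp ContinuousMap.fst, f.measurable.comp measurable_fst, rfl⟩, hf⟩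
  have hmem :
      (⟨F, hF⟩ : C(X × Y, ℝ)) ∈ _root_.closure (measurableContinuousMaps X Y : Set _) := by
    rw [← Subalgebra.topologicalClosure_coe,
      ContinuousMap.subalgebra_topologicalClosure_eq_top_of_separatesPoints _ hsep]
    trivial
  obtain ⟨u, hu, hlim⟩ := mem_closure_iff_seq_limit.mp hmem
  exact measurable_of_tendsto_metrizable hu
    (tendsto_pi_nhds.mpr fun p => (continuous_eval_const p).continuousAt.tendsto.comp hlim)

section InvariantSubgroup

variable {G : Type*} [Group G] [TopologicalSpace G] {ι : Type*}

def invariantSubgroup (f : ι → C(G, ℝ)) : Subgroup G where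
  carrier := {g | ∀ i h h', f i (h * g * h') = f i (h * h')}
  one_mem' := by simp
  mul_mem' {a b} ha hb i h h' := by
    have hab := (ha i h (b * h')).trans (by simpa only [mul_assoc] using hb i h h')
    simpa only [mul_assoc] using hab
  inv_mem' {a} ha i h h' := by simpa [mul_assoc] using (ha i (h * a⁻¹) h').symm

variable {f : ι → C(G, ℝ)}

theorem mem_invariantSubgroup {g : G} :
    g ∈ invariantSubgroup f ↔ ∀ i h h', f i (h * g * h') = f i (h * h') :=
  Iff.rfl

instance : (invariantSubgroup f).Normal where
  conj_mem a ha k i h h' := by simpa [mul_assoc] using ha i (h * k) (k⁻¹ * h')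

theorem apply_eq_of_mk_eq_mk {a b : G} (hab : (a : G ⧸ invariantSubgroup f) = b) (i : ι) :
    f i a = f i b := by
  simpa using (QuotientGroup.eq.mp hab i a 1).symm

theorem exists_injective_mk_invariantSubgroup [NormalSpace G] [T1Space G] {c : ι → G}
    (hc : Function.Injective c) :
    ∃ f : ι × ι → C(G, ℝ),
      Function.Injective fun i => (c i : G ⧸ invariantSubgroup f) := by
  have hsep (p : ι × ι) : ∃ f : C(G, ℝ), p.1 ≠ p.2 → f (c p.1) ≠ f (c p.2) := by
    by_cases hp : p.1 = p.2
    · exact ⟨0, fun h => absurd hp h⟩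
    · obtain ⟨f, hf⟩ := exists_continuousMap_apply_ne (hc.ne hp)
      exact ⟨f, fun _ => hf⟩
  choose f hf using hsep
  exact ⟨f, fun i j hij => by_contra fun hne => hf (i, j) hne (apply_eq_of_mk_eq_mk hij _)⟩

theorem measurableSet_preimage_invariantSubgroup [ContinuousMul G] [CompactSpace G]
    [T2Space G] [MeasurableSpace G] [BorelSpace G] [Countable ι] {φ : G × G → G}
    (hφ : Continuous φ) : MeasurableSet (φ ⁻¹' (invariantSubgroup f : Set G)) := by
  let Φ (i : ι) : C(G, C(G × G, ℝ)) :=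
    ContinuousMap.curry ⟨fun q : G × G × G => f i (q.2.1 * q.1 * q.2.2), by fun_prop⟩
  have hpre : φ ⁻¹' (invariantSubgroup f : Set G) =
      ⋂ i, (fun p => dist (Φ i (φ p)) (Φ i 1)) ⁻¹' {0} := by
    ext p
    simp [mem_invariantSubgroup, ContinuousMap.ext_iff, Φ]
  rw [hpre]
  exact .iInter fun i =>
    (Continuous.measurable_of_compactSpace_prod (by fun_prop)) (measurableSet_singleton 0)

theorem measurableSet_setOf_commute_mk [IsTopologicalGroup G] [CompactSpace G] [T2Space G]
    [MeasurableSpace G] [BorelSpace G] [Countable ι] :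
    MeasurableSet {p : G × G | Commute (p.1 : G ⧸ invariantSubgroup f) p.2} := by
  have hset : {p : G × G | Commute (p.1 : G ⧸ invariantSubgroup f) p.2} =
      (fun p => (p.1 * p.2)⁻¹ * (p.2 * p.1)) ⁻¹' (invariantSubgroup f : Set G) := by
    ext p
    simp [Commute, SemiconjBy, ← QuotientGroup.mk_mul, QuotientGroup.eq]
  rw [hset]
  exact measurableSet_preimage_invariantSubgroup (by fun_prop)

end InvariantSubgroup

theorem mem_fcCenter_iff_index_centralizer_ne_zero {G : Type*} [Group G] {a : G} :
    a ∈ fcCenter G ↔ (centralizer {a}).index ≠ 0 := by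
  have hindex : (centralizer {a}).index = (MulAction.stabilizer (ConjAct G) a).index := by
    rw [ConjAct.stabilizer_eq_centralizer]; rfl
  have horbit : MulAction.orbit (ConjAct G) a = {y | ∃ g : G, g * a * g⁻¹ = y} := by
    ext y
    simp [MulAction.mem_orbit_iff, ConjAct.smul_def, ConjAct.toConjAct.surjective.exists]
  rw [hindex, MulAction.index_stabilizer, horbit]
  exact ⟨fun h => ((Set.ncard_pos h).2 ⟨a, 1, by simp⟩).ne', Set.finite_of_ncard_ne_zero⟩

namespace MeasureTheory

variable {G : Type*} [Group G] [MeasurableSpace G] [MeasurableMul G] {μ : Measure G}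
  [μ.IsMulLeftInvariant] {H : Subgroup G}

theorem measure_subgroup_eq_zero_of_index_eq_zero [IsFiniteMeasure μ]
    (hH : MeasurableSet (H : Set G)) (hindex : H.index = 0) : μ H = 0 := by
  obtain ⟨s, hs, -⟩ := H.exists_isComplement_left 1
  have : Infinite s := by
    rw [← not_finite_iff_infinite, hs.finite_left_iff]
    exact fun h => h.index_ne_zero hindex
  let e : ℕ ↪ s := Infinite.natEmbedding s
  by_contra h0
  have htop : ∞ ≤ μ (⋃ n, (e n).val • (H : Set G)) := by
    rw [measure_iUnion (fun n m hnm ↦ hs.pairwiseDisjoint_smul (e n).2 (e m).2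
      (Subtype.val_injective.ne (e.injective.ne hnm))) (fun _ ↦ hH.const_smul _)]
    simp [measure_smul, ENNReal.tsum_const_eq_top_of_ne_zero h0]
  exact measure_ne_top μ _ (top_le_iff.mp htop)

theorem measure_subgroup_ne_zero_iff_index_ne_zero [IsFiniteMeasure μ] [NeZero μ]
    (hH : MeasurableSet (H : Set G)) : μ H ≠ 0 ↔ H.index ≠ 0 := by
  refine ⟨mt (measure_subgroup_eq_zero_of_index_eq_zero hH), fun hindex h0 => ?_⟩
  have : H.FiniteIndex := ⟨hindex⟩
  have huniv := H.index_mul_measure hH μ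
  rw [h0, mul_zero, eq_comm, Measure.measure_univ_eq_zero] at huniv
  exact NeZero.ne μ huniv

theorem measure_subgroup_le_half [IsProbabilityMeasure μ] (hH : MeasurableSet (H : Set G))
    (hne : H ≠ ⊤) : μ H ≤ 2⁻¹ := by
  by_cases hindex : H.index = 0
  · simp [measure_subgroup_eq_zero_of_index_eq_zero hH hindex]
  have : H.FiniteIndex := ⟨hindex⟩
  have htwo : (2 : ℝ≥0∞) ≤ H.index := by exact_mod_cast H.one_lt_index_of_ne_top hne
  rw [ENNReal.le_inv_iff_mul_le, mul_comm]
  calc 2 * μ H ≤ H.index * μ H := by gcongr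
    _ = 1 := by rw [H.index_mul_measure hH μ, measure_univ]

end MeasureTheory

section CommutingPairs

variable {G Q : Type*} [Group G] [MeasurableSpace G] [MeasurableMul G] {μ : Measure G}
  [μ.IsMulLeftInvariant] [Group Q] {π : G →* Q}

theorem measure_comap_centralizer_ne_zero_iff [IsFiniteMeasure μ] [NeZero μ]
    (hπ : Function.Surjective π) {a : G}
    (hC : MeasurableSet ((centralizer {π a}).comap π : Set G)) :
    μ ((centralizer {π a}).comap π) ≠ 0 ↔ π a ∈ fcCenter Q := by
  rw [measure_subgroup_ne_zero_iff_index_ne_zero hC, index_comap_of_surjective _ hπ,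
    mem_fcCenter_iff_index_centralizer_ne_zero]

theorem measure_comap_centralizer_le [IsProbabilityMeasure μ] (hπ : Function.Surjective π)
    (hC : ∀ a, MeasurableSet ((centralizer {π a}).comap π : Set G)) (x a : G) :
    μ ((centralizer {π a}).comap π) ≤
      ((fcCenter Q).comap π : Set G).indicator (fun _ => 2⁻¹) a +
        ((centralizer {π x}).comap π : Set G).indicator 1 a := by
  by_cases ha : π a ∈ fcCenter Q
  · by_cases hax : a ∈ (centralizer {π x}).comap π
    · calc μ ((centralizer {π a}).comap π) ≤ 1 := prob_le_one
        _ ≤ _ := by rw [Set.indicator_of_mem hax, Pi.one_apply]; exact le_add_self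
    · have hxa : x ∉ (centralizer {π a}).comap π := by
        simpa [mem_centralizer_singleton_iff, eq_comm] using hax
      calc μ ((centralizer {π a}).comap π) ≤ 2⁻¹ :=
            measure_subgroup_le_half (hC a) fun htop => hxa (htop ▸ mem_top x)
        _ ≤ _ := by simp [ha]
  · rw [not_ne_iff.mp (mt (measure_comap_centralizer_ne_zero_iff hπ (hC a)).mp ha)]
    exact zero_le

theorem measure_commute_le_quarter [IsProbabilityMeasure μ] (hπ : Function.Surjective π)
    (hmeas : MeasurableSet {p : G × G | Commute (π p.1) (π p.2)}) (hQ : fcCenter Q ≠ ⊤) :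
    (μ.prod μ) {p : G × G | Commute (π p.1) (π p.2)} ≤ 4⁻¹ := by
  set C : G → Subgroup G := fun a => (centralizer {π a}).comap π
  set H := (fcCenter Q).comap π
  have hsection (a : G) : Prod.mk a ⁻¹' {p : G × G | Commute (π p.1) (π p.2)} = C a := by
    ext b
    simp [C, mem_centralizer_singleton_iff, Commute, SemiconjBy, eq_comm]
  have hCmeas (a : G) : MeasurableSet (C a : Set G) :=
    hsection a ▸ hmeas.preimage measurable_prodMk_left
  have hHmeas : MeasurableSet (H : Set G) := by
    have hmeasC : Measurable fun a => μ (C a) := by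
      simpa only [hsection] using measurable_measure_prodMk_left (ν := μ) hmeas
    have hH : (H : Set G) = (fun a => μ (C a)) ⁻¹' {0}ᶜ :=
      Set.ext fun a => (measure_comap_centralizer_ne_zero_iff hπ (hCmeas a)).symm
    exact hH ▸ hmeasC (measurableSet_singleton 0).compl
  obtain ⟨q, hq⟩ := not_forall.mp (mt (eq_top_iff' _).mpr hQ)
  obtain ⟨x, rfl⟩ := hπ q
  have hHtop : H ≠ ⊤ := fun htop => hq (show x ∈ H from htop ▸ mem_top x)
  have hCx : μ (C x) = 0 :=
    not_ne_iff.mp (mt (measure_comap_centralizer_ne_zero_iff hπ (hCmeas x)).mp hq)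
  calc (μ.prod μ) {p : G × G | Commute (π p.1) (π p.2)} = ∫⁻ a, μ (C a) ∂μ := by
        rw [Measure.prod_apply hmeas]; simp_rw [hsection]
    _ ≤ ∫⁻ a, ((H : Set G).indicator (fun _ => 2⁻¹) a +
          (C x : Set G).indicator 1 a) ∂μ :=
        lintegral_mono (measure_comap_centralizer_le hπ hCmeas x)
    _ = 2⁻¹ * μ H + μ (C x) := by
        rw [lintegral_add_left (measurable_const.indicator hHmeas),
          lintegral_indicator_const hHmeas, lintegral_indicator_one (hCmeas x)]
    _ ≤ 2⁻¹ * 2⁻¹ + 0 := by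
        gcongr
        · exact measure_subgroup_le_half hHmeas hHtop
        · exact hCx.le
    _ = 4⁻¹ := by
        rw [add_zero, ← ENNReal.mul_inv (by simp) (by simp)]
        norm_num

end CommutingPairs

theorem fcCenter_eq_top_of_cp_gt_quarter_general
    {G : Type*} [Group G] [TopologicalSpace G] [IsTopologicalGroup G] [CompactSpace G]
    [T2Space G] [MeasurableSpace G] [BorelSpace G]
    (μ : Measure G) [μ.IsHaarMeasure] [IsProbabilityMeasure μ]
    (h : (1 / 4 : ℝ) < ((μ.prod μ) {p : G × G | p.1 * p.2 = p.2 * p.1}).toReal) :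
    fcCenter G = ⊤ := by
  by_contra hG
  obtain ⟨x, hx⟩ := not_forall.mp (mt (eq_top_iff' _).mpr hG)
  have hinf : {y : G | ∃ g : G, g * x * g⁻¹ = y}.Infinite := hx
  let c (n : ℕ) : G := hinf.natEmbedding _ n
  obtain ⟨f, hf⟩ := exists_injective_mk_invariantSubgroup (c := c)
    fun n m hnm => (hinf.natEmbedding _).injective (Subtype.ext hnm)
  have hQ : fcCenter (G ⧸ invariantSubgroup f) ≠ ⊤ := by
    refine fun htop => Set.infinite_of_injective_forall_mem hf (fun n => ?_)
      (htop ▸ mem_top (x : G ⧸ invariantSubgroup f))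
    obtain ⟨g, hg⟩ := (hinf.natEmbedding _ n).2
    exact ⟨g, by simp only [c, ← hg, QuotientGroup.mk_mul, QuotientGroup.mk_inv]⟩
  have hquarter := measure_commute_le_quarter (μ := μ) (QuotientGroup.mk'_surjective _)
    measurableSet_setOf_commute_mk hQ
  have hsub : {p : G × G | p.1 * p.2 = p.2 * p.1} ⊆
      {p : G × G | Commute (QuotientGroup.mk' (invariantSubgroup f) p.1)
        (QuotientGroup.mk' _ p.2)} :=
    fun p hp => (show Commute p.1 p.2 from hp).map _
  have hle := ENNReal.toReal_mono (by simp) ((measure_mono hsub).trans hquarter)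
  norm_num at hle
  linarith

/-- If `cp G > 1/4` then `G` equals its FC-center. -/
theorem fcCenter_eq_top_of_cp_gt_quarter
    {G : Type*} [Group G] [TopologicalSpace G] [IsTopologicalGroup G] [CompactSpace G]
    [T2Space G] [MeasurableSpace G] [BorelSpace G]
    (μ : Measure G) [μ.IsHaarMeasure] [μ.Regular] [IsProbabilityMeasure μ]
    (h : (1 / 4 : ℝ) < ((μ.prod μ) {p : G × G | p.1 * p.2 = p.2 * p.1}).toReal) :
    fcCenter G = ⊤ :=
  fcCenter_eq_top_of_cp_gt_quarter_general μ h
end
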